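/- Let H be a properly edge-colored triangle-free 2-regular graph. Construct the linear forest L whose components are paths with 3 edges, one for each edge vw of H, where the path corresponding to vw has its three edges colored v, φ(vw), w in order (each vertex of H serving as a new color). Then the maximum rainbow matching size of L equals the maximum rainbow matching size of H plus |E(H)|. -/

import Mathlib

open SimpleGraph

/-- A rainbow matching in an edge-colored graph: a set of edges of `G`, pairwise
vertex-disjoint, with pairwise distinct colors. -/
def RainbowMatching {V C : Type*} (G : SimpleGraph V) (phi : Sym2 V → C)
    (M : Set (Sym2 V)) : Prop :=
  M ⊆ G.edgeSet ∧
  (∀ e ∈ M, ∀ f ∈ M, e ≠ f → ∀ v, v ∈ e → v ∉ f) ∧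
  Set.InjOn phi M

/-- The maximum size of a rainbow matching in the edge-colored graph `(G, phi)`. -/
noncomputable def maxRainbow {V C : Type*} (G : SimpleGraph V) (phi : Sym2 V → C) : ℕ :=
  sSup {n : ℕ | ∃ M, RainbowMatching G phi M ∧ M.ncard = n}

/-- The color-line graph of an edge-colored graph: vertices are edges of `G`,
two distinct edges adjacent iff they share an endpoint or have the same color. -/
def colorLine {V C : Type*} (G : SimpleGraph V) (phi : Sym2 V → C) :
    SimpleGraph G.edgeSet where
  Adj e f := e ≠ f ∧ ((∃ v, v ∈ (e : Sym2 V) ∧ v ∈ (f : Sym2 V)) ∨ phi e = phi f)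
  symm := by
    constructor
    rintro e f ⟨hne, h⟩
    refine ⟨hne.symm, ?_⟩
    rcases h with ⟨v, hv1, hv2⟩ | h
    · exact Or.inl ⟨v, hv2, hv1⟩
    · exact Or.inr h.symm
  loopless := by constructor; rintro e ⟨hne, -⟩; exact hne rfl

/-- An edge coloring is proper if distinct edges sharing an endpoint get distinct colors. -/
def ProperColoring {V C : Type*} (G : SimpleGraph V) (phi : Sym2 V → C) : Prop :=
  ∀ e ∈ G.edgeSet, ∀ f ∈ G.edgeSet, e ≠ f →
    (∃ v, v ∈ e ∧ v ∈ f) → phi e ≠ phi f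

/-!
Index the paths of `L` by the edges of `H`. On the path over `e` a rainbow matching of `L` uses
either the middle edge, colored `phi e`, or one or both outer edges, colored by the endpoints
of `e`. As `H` is 2-regular, `|E(H)| = |V(H)|`.

Lower bound: take the middle edges over a maximum rainbow matching `R` of `H`. Every vertex `v`
has degree two, so it lies on an edge outside the matching `R`, and the path over that edge
supplies an outer edge of color `v`. This gives `|R| + |V|` edges.

Upper bound: for a rainbow matching `N` of `L`, let `T` be the edges of `H` whose middle edge
is in `N`, and `U` the vertex colors used by `N`, so that `|N| = |T| + |U|`. The set `T` is
rainbow in `H`, and a vertex of `U` lies on an edge outside `T`, hence on at most one edge of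
`T`. An edge set of maximum degree two contains a matching that misses at most one edge per
vertex of degree two, so `T` contains a rainbow matching of size at least `|T| - (|V| - |U|)`.
-/

lemma Set.ncard_eq_ncard_preimage_inl_add_ncard_preimage_inr {α β : Type*} {s : Set (α ⊕ β)}
    (hs : s.Finite) : s.ncard = (Sum.inl ⁻¹' s).ncard + (Sum.inr ⁻¹' s).ncard := by
  conv_lhs => rw [← Set.image_preimage_inl_union_image_preimage_inr s]
  rw [Set.ncard_union_eq Set.disjoint_image_inl_image_inr
      ((hs.subset (Set.image_preimage_subset _ _))) (hs.subset (Set.image_preimage_subset _ _)),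
    Set.ncard_image_of_injective _ Sum.inl_injective,
    Set.ncard_image_of_injective _ Sum.inr_injective]

section Matchings

variable {V : Type*}

def PairwiseVertexDisjoint (M : Set (Sym2 V)) : Prop :=
  ∀ e ∈ M, ∀ f ∈ M, e ≠ f → ∀ v, v ∈ e → v ∉ f

def sharedVerts (F : Set (Sym2 V)) : Set V :=
  {v | ∃ e ∈ F, ∃ f ∈ F, e ≠ f ∧ v ∈ e ∧ v ∈ f}

lemma sharedVerts_mono {F F' : Set (Sym2 V)} (h : F' ⊆ F) : sharedVerts F' ⊆ sharedVerts F :=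
  fun _ ⟨e, he, f, hf, hef, hve, hvf⟩ => ⟨e, h he, f, h hf, hef, hve, hvf⟩

/-- Deleting one of two edges at a shared vertex makes that vertex unshared, since no vertex
lies on three edges; so each deletion on the way to a matching is paid for by a shared vertex. -/
theorem exists_pairwiseVertexDisjoint_subset_ncard_le [Finite V] (F : Set (Sym2 V))
    (hdeg : ∀ v, ∀ e ∈ F, ∀ f ∈ F, ∀ g ∈ F, v ∈ e → v ∈ f → v ∈ g → e = f ∨ e = g ∨ f = g) :
    ∃ P ⊆ F, PairwiseVertexDisjoint P ∧ F.ncard ≤ P.ncard + (sharedVerts F).ncard := by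
  induction hn : F.ncard using Nat.strong_induction_on generalizing F with
  | _ n ih =>
    by_cases hF : PairwiseVertexDisjoint F
    · exact ⟨F, subset_rfl, hF, by omega⟩
    simp only [PairwiseVertexDisjoint, not_forall, not_not] at hF
    obtain ⟨e, he, f, hf, hef, v, hve, hvf⟩ := hF
    have hcard : (F \ {e}).ncard + 1 = n := hn ▸ Set.ncard_sdiff_singleton_add_one he
    obtain ⟨P, hPF, hP, hPcard⟩ := ih _ (by omega) (F \ {e})
      (fun w a ha b hb c hc => hdeg w a ha.1 b hb.1 c hc.1) rfl
    have hshared : sharedVerts (F \ {e}) ⊂ sharedVerts F := by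
      refine (Set.ssubset_iff_of_subset (sharedVerts_mono Set.sdiff_subset)).2
        ⟨v, ⟨e, he, f, hf, hef, hve, hvf⟩, ?_⟩
      rintro ⟨a, ⟨ha, hae⟩, b, ⟨hb, hbe⟩, hab, hva, hvb⟩
      rcases hdeg v a ha b hb e he hva hvb hve with h | h | h
      exacts [hab h, hae h, hbe h]
    have := Set.ncard_lt_ncard hshared
    exact ⟨P, hPF.trans Set.sdiff_subset, hP, by omega⟩

end Matchings

section RainbowMatching

variable {V C : Type*} {G : SimpleGraph V} {phi : Sym2 V → C}

lemma rainbowMatching_empty : RainbowMatching G phi ∅ :=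
  ⟨Set.empty_subset _, by simp, Set.injOn_empty _⟩

lemma RainbowMatching.union {M N : Set (Sym2 V)} (hM : RainbowMatching G phi M)
    (hN : RainbowMatching G phi N) (hdisj : ∀ e ∈ M, ∀ f ∈ N, ∀ v, v ∈ e → v ∉ f)
    (hcol : ∀ e ∈ M, ∀ f ∈ N, phi e ≠ phi f) :
    Disjoint M N ∧ RainbowMatching G phi (M ∪ N) := by
  have hMN : Disjoint M N := Set.disjoint_left.2 fun e he he' => hcol e he e he' rfl
  refine ⟨hMN, Set.union_subset hM.1 hN.1, ?_, (Set.injOn_union hMN).2 ⟨hM.2.2, hN.2.2, hcol⟩⟩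
  rintro e (he | he) f (hf | hf) hef v hve
  · exact hM.2.1 e he f hf hef v hve
  · exact hdisj e he f hf v hve
  · exact fun hvf => hdisj f hf e he v hvf hve
  · exact hN.2.1 e he f hf hef v hve

lemma bddAbove_ncard_rainbowMatching [Finite V] :
    BddAbove {n : ℕ | ∃ M, RainbowMatching G phi M ∧ M.ncard = n} :=
  ⟨Nat.card (Sym2 V), by rintro _ ⟨M, -, rfl⟩; exact Set.ncard_le_card M⟩

lemma RainbowMatching.ncard_le_maxRainbow [Finite V] {M : Set (Sym2 V)}
    (hM : RainbowMatching G phi M) : M.ncard ≤ maxRainbow G phi :=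
  le_csSup bddAbove_ncard_rainbowMatching ⟨M, hM, rfl⟩

lemma exists_rainbowMatching_ncard_eq_maxRainbow [Finite V] :
    ∃ M, RainbowMatching G phi M ∧ M.ncard = maxRainbow G phi :=
  Nat.sSup_mem (s := {n | ∃ M, RainbowMatching G phi M ∧ M.ncard = n})
    ⟨0, ∅, rainbowMatching_empty, Set.ncard_empty _⟩ bddAbove_ncard_rainbowMatching

lemma maxRainbow_le {k : ℕ} (h : ∀ M, RainbowMatching G phi M → M.ncard ≤ k) :
    maxRainbow G phi ≤ k :=
  csSup_le' (by rintro _ ⟨M, hM, rfl⟩; exact h M hM)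

end RainbowMatching

namespace SimpleGraph

variable {V : Type*} {H : SimpleGraph V} {v : V}

lemma eq_or_eq_or_eq_of_mem_incidenceSet [Finite V] (hv : (H.neighborSet v).ncard ≤ 2)
    {e f g : Sym2 V} (he : e ∈ H.incidenceSet v) (hf : f ∈ H.incidenceSet v)
    (hg : g ∈ H.incidenceSet v) : e = f ∨ e = g ∨ f = g := by
  classical
  have hcard : (H.incidenceSet v).ncard ≤ 2 := by
    rwa [← Nat.card_coe_set_eq, Nat.card_congr (H.incidenceSetEquivNeighborSet v),
      Nat.card_coe_set_eq]
  by_contra! h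
  exact hcard.not_gt ((Set.two_lt_ncard).2 ⟨e, he, f, hf, g, hg, h.1, h.2.1, h.2.2⟩)

lemma exists_mem_incidenceSet_notMem [Finite V] (hv : 2 ≤ (H.neighborSet v).ncard)
    {M : Set (Sym2 V)} (hM : PairwiseVertexDisjoint M) :
    ∃ e ∈ H.incidenceSet v, e ∉ M := by
  obtain ⟨a, b, ha, hb, hab⟩ := (Set.one_lt_ncard_iff).1 hv
  by_contra! h
  exact hM _ (h _ ⟨ha, Sym2.mem_mk_left _ _⟩) _ (h _ ⟨hb, Sym2.mem_mk_left _ _⟩)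
    (fun h => hab (Sym2.congr_right.1 h)) v (Sym2.mem_mk_left _ _) (Sym2.mem_mk_left _ _)

lemma ncard_edgeSet_eq_card [Fintype V] (hreg : ∀ v, (H.neighborSet v).ncard = 2) :
    H.edgeSet.ncard = Nat.card V := by
  classical
  have hdeg : ∀ v, H.degree v = 2 := fun v => by
    rw [← card_neighborSet_eq_degree, ← Nat.card_eq_fintype_card, Nat.card_coe_set_eq, hreg]
  have := H.sum_degrees_eq_twice_card_edges
  simp only [hdeg, Finset.sum_const, Finset.card_univ, smul_eq_mul] at this
  rw [Nat.card_eq_fintype_card, ← coe_edgeFinset, Set.ncard_coe_finset]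
  omega

end SimpleGraph

section PathForest

variable {α : Type*}

def pathEdge (a : α) (i : Fin 3) : Sym2 (α × Fin 4) := s((a, i.castSucc), (a, i.succ))

def pathForest (α : Type*) : SimpleGraph (α × Fin 4) :=
  fromEdgeSet {p | ∃ (a : α) (i : Fin 3), p = pathEdge a i}

lemma mem_pathEdge {x : α × Fin 4} {a : α} {i : Fin 3} :
    x ∈ pathEdge a i ↔ x = (a, i.castSucc) ∨ x = (a, i.succ) :=
  Sym2.mem_iff

lemma eq_and_near_of_mem_pathEdge {x : α × Fin 4} {a b : α} {i j : Fin 3}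
    (ha : x ∈ pathEdge a i) (hb : x ∈ pathEdge b j) :
    a = b ∧ (i : ℕ) ≤ j + 1 ∧ (j : ℕ) ≤ i + 1 := by
  rw [mem_pathEdge] at ha hb
  rcases ha with rfl | rfl <;> rcases hb with h | h <;>
    simp only [Prod.mk.injEq, Fin.ext_iff, Fin.val_castSucc, Fin.val_succ] at h <;>
    exact ⟨h.1, by omega⟩

lemma pathEdge_injective : Function.Injective2 (pathEdge (α := α)) := by
  intro a b i j h
  rcases Sym2.eq_iff.1 h with ⟨h₁, -⟩ | ⟨h₁, h₂⟩
  · simp only [Prod.mk.injEq, Fin.castSucc_inj] at h₁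
    exact h₁
  · simp only [Prod.mk.injEq, Fin.ext_iff, Fin.val_castSucc, Fin.val_succ] at h₁ h₂
    omega

lemma mem_edgeSet_pathForest {p : Sym2 (α × Fin 4)} :
    p ∈ (pathForest α).edgeSet ↔ ∃ a i, p = pathEdge a i := by
  rw [pathForest, edgeSet_fromEdgeSet]
  refine ⟨fun h => h.1, fun h => ⟨h, ?_⟩⟩
  obtain ⟨a, i, rfl⟩ := h
  simp [pathEdge, Fin.ext_iff]

lemma pathEdge_mem_edgeSet (a : α) (i : Fin 3) : pathEdge a i ∈ (pathForest α).edgeSet :=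
  mem_edgeSet_pathForest.2 ⟨a, i, rfl⟩

lemma pathEdge_one_notMem {N : Set (Sym2 (α × Fin 4))} (hN : PairwiseVertexDisjoint N) {a : α}
    {i : Fin 3} (hi : pathEdge a i ∈ N) (hi1 : i ≠ 1) : pathEdge a 1 ∉ N := by
  intro h
  have hne : pathEdge a i ≠ pathEdge a 1 := fun h' => hi1 (pathEdge_injective h').2
  fin_cases i
  · exact hN _ hi _ h hne (a, 1) (Sym2.mem_mk_right _ _) (Sym2.mem_mk_left _ _)
  · exact hi1 rfl
  · exact hN _ hi _ h hne (a, 2) (Sym2.mem_mk_left _ _) (Sym2.mem_mk_right _ _)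

lemma rainbowMatching_range_pathEdge {ι γ : Type*} {c : Sym2 (α × Fin 4) → γ}
    (a : ι → α) (i : ι → Fin 3) (hi : ∀ k, i k ≠ 1)
    (hinj : Function.Injective fun k => c (pathEdge (a k) (i k))) :
    RainbowMatching (pathForest α) c (Set.range fun k => pathEdge (a k) (i k)) := by
  refine ⟨?_, ?_, ?_⟩
  · rintro _ ⟨k, rfl⟩
    exact pathEdge_mem_edgeSet _ _
  · rintro _ ⟨k, rfl⟩ _ ⟨l, rfl⟩ hkl x hxk hxl
    obtain ⟨hakl, hikl⟩ := eq_and_near_of_mem_pathEdge hxk hxl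
    have hk1 : (i k : ℕ) ≠ 1 := fun h => hi k (Fin.ext h)
    have hl1 : (i l : ℕ) ≠ 1 := fun h => hi l (Fin.ext h)
    exact hkl (by dsimp only; rw [hakl, Fin.ext (by omega : (i k : ℕ) = i l)])
  · rintro _ ⟨k, rfl⟩ _ ⟨l, rfl⟩ hkl
    rw [hinj hkl]

end PathForest

section EdgePaths

variable {V C : Type*} {H : SimpleGraph V} {phi : Sym2 V → C} {fst snd : H.edgeSet → V}
  {phiL : Sym2 (H.edgeSet × Fin 4) → V ⊕ C} {N : Set (Sym2 (H.edgeSet × Fin 4))}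

lemma RainbowMatching.image_pathEdge_one
    (h1 : ∀ e : H.edgeSet, phiL (pathEdge e 1) = Sum.inr (phi e))
    {R : Set (Sym2 V)} (hR : RainbowMatching H phi R) :
    RainbowMatching (pathForest H.edgeSet) phiL
      ((fun e : H.edgeSet => pathEdge e 1) '' (Subtype.val ⁻¹' R)) := by
  refine ⟨?_, ?_, ?_⟩
  · rintro _ ⟨e, -, rfl⟩
    exact pathEdge_mem_edgeSet e 1
  · rintro _ ⟨e, -, rfl⟩ _ ⟨f, -, rfl⟩ hef x hxe hxf
    exact hef (by rw [(eq_and_near_of_mem_pathEdge hxe hxf).1])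
  · rintro _ ⟨e, he, rfl⟩ _ ⟨f, hf, rfl⟩ hef
    simp only [h1, Sum.inr.injEq] at hef
    rw [Subtype.ext (hR.2.2 he hf hef)]

lemma exists_pathEdge_color_eq_inl (hends : ∀ e : H.edgeSet, s(fst e, snd e) = (e : Sym2 V))
    (h0 : ∀ e : H.edgeSet, phiL (pathEdge e 0) = Sum.inl (fst e))
    (h2 : ∀ e : H.edgeSet, phiL (pathEdge e 2) = Sum.inl (snd e))
    {e : H.edgeSet} {v : V} (hv : v ∈ (e : Sym2 V)) :
    ∃ i : Fin 3, i ≠ 1 ∧ phiL (pathEdge e i) = Sum.inl v := by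
  rw [← hends, Sym2.mem_iff] at hv
  rcases hv with rfl | rfl
  exacts [⟨0, by decide, h0 e⟩, ⟨2, by decide, h2 e⟩]

theorem maxRainbow_add_card_le_maxRainbow_pathForest [Finite V]
    (hdeg : ∀ v, 2 ≤ (H.neighborSet v).ncard)
    (hends : ∀ e : H.edgeSet, s(fst e, snd e) = (e : Sym2 V))
    (h0 : ∀ e : H.edgeSet, phiL (pathEdge e 0) = Sum.inl (fst e))
    (h1 : ∀ e : H.edgeSet, phiL (pathEdge e 1) = Sum.inr (phi e))
    (h2 : ∀ e : H.edgeSet, phiL (pathEdge e 2) = Sum.inl (snd e)) :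
    maxRainbow H phi + Nat.card V ≤ maxRainbow (pathForest H.edgeSet) phiL := by
  obtain ⟨R, hR, hRcard⟩ := exists_rainbowMatching_ncard_eq_maxRainbow (G := H) (phi := phi)
  have hout (v : V) : ∃ (e : H.edgeSet) (i : Fin 3),
      (e : Sym2 V) ∉ R ∧ i ≠ 1 ∧ phiL (pathEdge e i) = Sum.inl v := by
    obtain ⟨e, ⟨he, hve⟩, heR⟩ := H.exists_mem_incidenceSet_notMem (hdeg v) hR.2.1
    obtain ⟨i, hi, hcol⟩ := exists_pathEdge_color_eq_inl hends h0 h2 (e := ⟨e, he⟩) hve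
    exact ⟨⟨e, he⟩, i, heR, hi, hcol⟩
  choose e i heR hi hcol using hout
  have hinj : Function.Injective fun v => phiL (pathEdge (e v) (i v)) := fun v w h => by
    simpa [hcol] using h
  set M₁ := (fun e : H.edgeSet => pathEdge e 1) '' (Subtype.val ⁻¹' R)
  set M₂ := Set.range fun v => pathEdge (e v) (i v)
  have hcross : ∀ f ∈ M₁, ∀ f' ∈ M₂, ∀ x, x ∈ f → x ∉ f' := by
    rintro _ ⟨f, hf, rfl⟩ _ ⟨v, rfl⟩ x hxf hxv
    exact heR v (by rw [← (eq_and_near_of_mem_pathEdge hxf hxv).1]; exact hf)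
  have hcolors : ∀ f ∈ M₁, ∀ f' ∈ M₂, phiL f ≠ phiL f' := by
    rintro _ ⟨f, -, rfl⟩ _ ⟨v, rfl⟩
    simp [h1, hcol]
  obtain ⟨hdisj, hM⟩ := (hR.image_pathEdge_one h1).union
    (rainbowMatching_range_pathEdge e i hi hinj) hcross hcolors
  calc maxRainbow H phi + Nat.card V = M₁.ncard + M₂.ncard := by
        rw [Set.ncard_range_of_injective (hinj.of_comp (f := phiL)),
          ← hRcard, Set.ncard_image_of_injective _ (fun f f' h => (pathEdge_injective h).1),
          Set.ncard_preimage_of_injective_subset_range Subtype.val_injective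
            (by rw [Subtype.range_coe]; exact hR.1)]
    _ = (M₁ ∪ M₂).ncard := (Set.ncard_union_eq hdisj).symm
    _ ≤ maxRainbow (pathForest H.edgeSet) phiL := hM.ncard_le_maxRainbow

lemma injOn_color_setOf_pathEdge_one_mem
    (h1 : ∀ e : H.edgeSet, phiL (pathEdge e 1) = Sum.inr (phi e))
    (hN : RainbowMatching (pathForest H.edgeSet) phiL N) :
    Set.InjOn (fun e : H.edgeSet => phi e) {e | pathEdge e 1 ∈ N} := fun e he f hf hef =>
  (pathEdge_injective (hN.2.2 he hf (by simp only [h1, hef]))).1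

lemma ncard_eq_of_rainbowMatching_pathForest [Finite V]
    (h0 : ∀ e : H.edgeSet, phiL (pathEdge e 0) = Sum.inl (fst e))
    (h1 : ∀ e : H.edgeSet, phiL (pathEdge e 1) = Sum.inr (phi e))
    (h2 : ∀ e : H.edgeSet, phiL (pathEdge e 2) = Sum.inl (snd e))
    (hN : RainbowMatching (pathForest H.edgeSet) phiL N) :
    N.ncard = {e | pathEdge e 1 ∈ N}.ncard + (Sum.inl ⁻¹' (phiL '' N)).ncard := by
  have hinr : Sum.inr ⁻¹' (phiL '' N) =
      (fun e : H.edgeSet => phi e) '' {e | pathEdge e 1 ∈ N} := by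
    ext c
    constructor
    · rintro ⟨x, hx, hxc⟩
      obtain ⟨e, i, rfl⟩ := mem_edgeSet_pathForest.1 (hN.1 hx)
      fin_cases i
      · simp [h0] at hxc
      · exact ⟨e, hx, by simpa [h1] using hxc⟩
      · simp [h2] at hxc
    · rintro ⟨e, he, rfl⟩
      exact ⟨_, he, h1 e⟩
  rw [← hN.2.2.ncard_image,
    Set.ncard_eq_ncard_preimage_inl_add_ncard_preimage_inr (Set.toFinite _), hinr,
    (injOn_color_setOf_pathEdge_one_mem h1 hN).ncard_image, add_comm]

lemma exists_mem_pathEdge_one_notMem_of_inl_mem_image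
    (hends : ∀ e : H.edgeSet, s(fst e, snd e) = (e : Sym2 V))
    (h0 : ∀ e : H.edgeSet, phiL (pathEdge e 0) = Sum.inl (fst e))
    (h1 : ∀ e : H.edgeSet, phiL (pathEdge e 1) = Sum.inr (phi e))
    (h2 : ∀ e : H.edgeSet, phiL (pathEdge e 2) = Sum.inl (snd e))
    (hN : RainbowMatching (pathForest H.edgeSet) phiL N) {v : V}
    (hv : Sum.inl v ∈ phiL '' N) :
    ∃ e : H.edgeSet, v ∈ (e : Sym2 V) ∧ pathEdge e 1 ∉ N := by
  obtain ⟨x, hx, hxv⟩ := hv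
  obtain ⟨e, i, rfl⟩ := mem_edgeSet_pathForest.1 (hN.1 hx)
  have hi1 : i ≠ 1 := by
    rintro rfl
    simp [h1] at hxv
  refine ⟨e, ?_, pathEdge_one_notMem hN.2.1 hx hi1⟩
  rw [← hends]
  fin_cases i
  · simp_all
  · exact absurd rfl hi1
  · simp_all

theorem maxRainbow_pathForest_le_maxRainbow_add_card [Finite V]
    (hdeg : ∀ v, (H.neighborSet v).ncard ≤ 2)
    (hends : ∀ e : H.edgeSet, s(fst e, snd e) = (e : Sym2 V))
    (h0 : ∀ e : H.edgeSet, phiL (pathEdge e 0) = Sum.inl (fst e))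
    (h1 : ∀ e : H.edgeSet, phiL (pathEdge e 1) = Sum.inr (phi e))
    (h2 : ∀ e : H.edgeSet, phiL (pathEdge e 2) = Sum.inl (snd e)) :
    maxRainbow (pathForest H.edgeSet) phiL ≤ maxRainbow H phi + Nat.card V := by
  refine maxRainbow_le fun N hN => ?_
  rw [ncard_eq_of_rainbowMatching_pathForest h0 h1 h2 hN]
  set T := {e : H.edgeSet | pathEdge e 1 ∈ N}
  set U := Sum.inl ⁻¹' (phiL '' N)
  have hshared : sharedVerts (Subtype.val '' T) ⊆ Uᶜ := by
    rintro v ⟨_, ⟨f, hf, rfl⟩, _, ⟨f', hf', rfl⟩, hff', hvf, hvf'⟩ hv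
    obtain ⟨e, hve, he⟩ := exists_mem_pathEdge_one_notMem_of_inl_mem_image hends h0 h1 h2 hN hv
    rcases H.eq_or_eq_or_eq_of_mem_incidenceSet (hdeg v) ⟨f.2, hvf⟩ ⟨f'.2, hvf'⟩ ⟨e.2, hve⟩
      with h | h | h
    · exact hff' h
    · exact he (Subtype.ext h ▸ hf)
    · exact he (Subtype.ext h ▸ hf')
  obtain ⟨P, hPT, hP, hPcard⟩ := exists_pairwiseVertexDisjoint_subset_ncard_le
    (Subtype.val '' T) fun v _ ⟨f, _, hf⟩ _ ⟨f', _, hf'⟩ _ ⟨f'', _, hf''⟩ hvf hvf' hvf'' =>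
      H.eq_or_eq_or_eq_of_mem_incidenceSet (hdeg v) ⟨hf ▸ f.2, hvf⟩ ⟨hf' ▸ f'.2, hvf'⟩
        ⟨hf'' ▸ f''.2, hvf''⟩
  have hPmax : P.ncard ≤ maxRainbow H phi := RainbowMatching.ncard_le_maxRainbow
    ⟨hPT.trans (by rintro _ ⟨f, -, rfl⟩; exact f.2), hP,
      ((injOn_color_setOf_pathEdge_one_mem h1 hN).image_of_comp).mono hPT⟩
  have hU := Set.ncard_add_ncard_compl U
  have hTU := Set.ncard_le_ncard hshared
  rw [Set.ncard_image_of_injective _ Subtype.val_injective] at hPcard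
  omega

end EdgePaths

theorem maxRainbow_edge_paths_general {V C : Type*} [Fintype V]
    (H : SimpleGraph V) (phi : Sym2 V → C)
    (hreg : ∀ v : V, (H.neighborSet v).ncard = 2)
    (fst snd : H.edgeSet → V)
    (hends : ∀ e : H.edgeSet, s(fst e, snd e) = (e : Sym2 V))
    (L : SimpleGraph (H.edgeSet × Fin 4))
    (hL : L = SimpleGraph.fromEdgeSet
      {p | ∃ (e : H.edgeSet) (i : Fin 3), p = s((e, i.castSucc), (e, i.succ))})
    (phiL : Sym2 (H.edgeSet × Fin 4) → V ⊕ C)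
    (h0 : ∀ e : H.edgeSet, phiL s((e, 0), (e, 1)) = Sum.inl (fst e))
    (h1 : ∀ e : H.edgeSet, phiL s((e, 1), (e, 2)) = Sum.inr (phi e))
    (h2 : ∀ e : H.edgeSet, phiL s((e, 2), (e, 3)) = Sum.inl (snd e)) :
    maxRainbow L phiL = maxRainbow H phi + H.edgeSet.ncard := by
  subst hL
  rw [H.ncard_edgeSet_eq_card hreg]
  exact le_antisymm
    (maxRainbow_pathForest_le_maxRainbow_add_card (fun v => (hreg v).le) hends h0 h1 h2)
    (maxRainbow_add_card_le_maxRainbow_pathForest (fun v => (hreg v).ge) hends h0 h1 h2)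

/-- Let `H` be a properly edge-colored triangle-free 2-regular graph.  Build the linear
forest `L` with one path of three edges for each edge `e = vw` of `H`, the three edges
being colored `v`, `phi e`, `w` in order (vertices of `H` serve as new colors, via
`Sum.inl`).  Then the maximum rainbow matching size of `L` equals that of `H`
plus the number of edges of `H`. -/
theorem maxRainbow_edge_paths {V C : Type*} [Fintype V] [DecidableEq V]
    (H : SimpleGraph V) (phi : Sym2 V → C)
    (hproper : ProperColoring H phi)
    (htf : H.CliqueFree 3)
    (hreg : ∀ v : V, (H.neighborSet v).ncard = 2)
    (fst snd : H.edgeSet → V)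
    (hends : ∀ e : H.edgeSet, s(fst e, snd e) = (e : Sym2 V))
    (L : SimpleGraph (H.edgeSet × Fin 4))
    (hL : L = SimpleGraph.fromEdgeSet
      {p | ∃ (e : H.edgeSet) (i : Fin 3), p = s((e, i.castSucc), (e, i.succ))})
    (phiL : Sym2 (H.edgeSet × Fin 4) → V ⊕ C)
    (h0 : ∀ e : H.edgeSet, phiL s((e, 0), (e, 1)) = Sum.inl (fst e))
    (h1 : ∀ e : H.edgeSet, phiL s((e, 1), (e, 2)) = Sum.inr (phi e))
    (h2 : ∀ e : H.edgeSet, phiL s((e, 2), (e, 3)) = Sum.inl (snd e)) :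
    maxRainbow L phiL = maxRainbow H phi + H.edgeSet.ncard :=
  maxRainbow_edge_paths_general H phi hreg fst snd hends L hL phiL h0 h1 h2
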